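/- Let k̃ = min{ k ∈ ℕ : s_k(a) > c - 1 }. Then the embedding dimension of G_{a,b}(c) equals k̃. -/

import Mathlib

/-- `sF a k = Σ_{i=0}^{k-1} a^i` (so `sF a 0 = 0`). -/
def sF (a k : ℕ) : ℕ := ∑ i ∈ Finset.range k, a ^ i

/-- `tF a b c k = a^k * c + b * sF a k`. -/
def tF (a b c k : ℕ) : ℕ := a ^ k * c + b * sF a k

/-- A θ_{a,b}-semigroup: contains 0, closed under addition, and closed under
`x ↦ a*x + b` on nonzero elements. -/
def IsThetaSG (a b : ℕ) (S : Set ℕ) : Prop :=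
  0 ∈ S ∧ (∀ x ∈ S, ∀ y ∈ S, x + y ∈ S) ∧ ∀ y ∈ S, y ≠ 0 → a * y + b ∈ S

/-- `Gset a b c` : the smallest θ_{a,b}-semigroup containing `c`. -/
def Gset (a b c : ℕ) : Set ℕ := ⋂₀ {S : Set ℕ | IsThetaSG a b S ∧ c ∈ S}

/-- `Hmon a b c` : additive submonoid generated by the `tF a b c k`. -/
def Hmon (a b c : ℕ) : AddSubmonoid ℕ :=
  AddSubmonoid.closure {x | ∃ k, x = tF a b c k}

/-- `{j_i}_{i=1}^k` is `a`-reduced. -/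
def AReduced (a k : ℕ) (j : ℕ → ℕ) : Prop :=
  (∀ i, 1 ≤ i → i ≤ k → j i ≤ a) ∧ j k ≠ 0 ∧
  ∀ m, 1 ≤ m → m ≤ k → j m = a → ∀ i, 1 ≤ i → i < m → j i = 0

/-! Put `t_k = a^k c + b s_k`. Since `t_{k+1} = a t_k + b` and `a (t_k + y) + b = t_{k+1} + a y`,
`G_{a,b}(c)` is the monoid generated by all the `t_k`. Every `a^K c + b Y` with `Y < s_K` is a sum
of `t_i` with `i < K` (split `Y` into `a` pieces `≤ s_{K-1}`), so for `s_k ≥ c` the decomposition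
`t_k = (a^k c + b (s_k - c)) + b t_0` shows that `t_0, …, t_{k̃-1}` generate.
Conversely `t_k = d s_k + c` with `d = c (a - 1) + b` prime to `c`, so a sum of `J` generators has
the form `d Y + c J`; splitting `t_i` with `s_i < c` into two nonzero parts would give
`c ∣ d (s_i - Y)` with `0 < s_i - Y < c`. Hence these `k̃` elements lie in every generating set. -/

theorem AddSubmonoid.mem_of_mem_closure_of_forall_add_eq {M : Type*} [AddMonoid M] {s : Set M}
    {x : M} (hx : x ∈ AddSubmonoid.closure s) (hx0 : x ≠ 0)
    (hirr : ∀ y ∈ AddSubmonoid.closure s, ∀ z ∈ AddSubmonoid.closure s, y + z = x → y = 0 ∨ z = 0) :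
    x ∈ s := by
  induction hx using AddSubmonoid.closure_induction with
  | mem x hx => exact hx
  | zero => exact absurd rfl hx0
  | add y z hy hz ihy ihz =>
    rcases hirr y hy z hz rfl with rfl | rfl
    · rw [zero_add] at hirr hx0 ⊢
      exact ihz hx0 hirr
    · rw [add_zero] at hirr hx0 ⊢
      exact ihy hx0 hirr

theorem AddSubmonoid.mul_add_mul_mem_of_forall_le {M : AddSubmonoid ℕ} {A b S : ℕ}
    (h : ∀ y ≤ S, A + b * y ∈ M) (n : ℕ) {Y : ℕ} (hY : Y ≤ n * S) : n * A + b * Y ∈ M := by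
  induction n generalizing Y with
  | zero => simp_all
  | succ n ih =>
    have hsplit :
        (n + 1) * A + b * Y = (n * A + b * (Y - min Y S)) + (A + b * min Y S) := by
      have hbY : b * Y = b * (Y - min Y S) + b * min Y S := by
        rw [← Nat.mul_add, Nat.sub_add_cancel (min_le_left Y S)]
      rw [hbY]
      ring
    rw [hsplit]
    refine add_mem (ih ?_) (h _ (min_le_right Y S))
    rw [Nat.add_mul, one_mul] at hY
    omega

section

variable {a b c : ℕ}

theorem sF_succ (a k : ℕ) : sF a (k + 1) = a * sF a k + 1 := by
  simp only [sF, Finset.sum_range_succ', pow_succ, pow_zero, ← Finset.sum_mul]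
  ring

theorem sF_mono (a : ℕ) : Monotone (sF a) := fun _ _ h =>
  Finset.sum_le_sum_of_subset (Finset.range_subset_range.2 h)

theorem sF_strictMono (ha : 0 < a) : StrictMono (sF a) :=
  strictMono_nat_of_lt_succ fun k => by
    simpa [sF, Finset.sum_range_succ] using pow_pos ha k

theorem pow_eq_sub_one_mul_sF_add_one (ha : 0 < a) (k : ℕ) : a ^ k = (a - 1) * sF a k + 1 := by
  induction k with
  | zero => simp [sF]
  | succ k ih =>
    obtain ⟨a, rfl⟩ : ∃ a', a = a' + 1 := ⟨a - 1, by omega⟩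
    rw [pow_succ, ih, sF_succ, Nat.add_sub_cancel]
    ring

theorem tF_zero (a b c : ℕ) : tF a b c 0 = c := by simp [tF, sF]

theorem tF_succ (a b c k : ℕ) : tF a b c (k + 1) = a * tF a b c k + b := by
  simp only [tF, sF_succ, pow_succ]
  ring

theorem tF_pos (hb : 0 < b) (hc : 0 < c) (k : ℕ) : 0 < tF a b c k := by
  cases k with
  | zero => rwa [tF_zero]
  | succ k => rw [tF_succ]; omega

theorem tF_strictMono (ha : 0 < a) (hb : 0 < b) : StrictMono (tF a b c) :=
  strictMono_nat_of_lt_succ fun k => by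
    rw [tF_succ]
    nlinarith

theorem tF_eq_mul_sF_add (ha : 0 < a) (k : ℕ) :
    tF a b c k = (c * (a - 1) + b) * sF a k + c := by
  rw [tF, pow_eq_sub_one_mul_sF_add_one ha]
  ring

theorem Gset_eq_Hmon (hb : 0 < b) (hc : 0 < c) : Gset a b c = Hmon a b c := by
  refine subset_antisymm (Set.sInter_subset_of_mem
    ⟨⟨zero_mem _, fun x hx y hy => add_mem hx hy, ?_⟩,
      AddSubmonoid.subset_closure ⟨0, (tF_zero a b c).symm⟩⟩) ?_
  · intro y hy hy0
    induction hy using AddSubmonoid.closure_induction with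
    | mem x hx =>
      obtain ⟨k, rfl⟩ := hx
      exact AddSubmonoid.subset_closure ⟨k + 1, (tF_succ a b c k).symm⟩
    | zero => exact absurd rfl hy0
    | add x y hx hy ihx _ =>
      rcases eq_or_ne x 0 with rfl | hx0
      · simp_all
      have hsplit : a * (x + y) + b = (a * x + b) + a • y := by rw [smul_eq_mul]; ring
      rw [hsplit]
      exact add_mem (ihx hx0) (nsmul_mem hy a)
  · rintro x hx S ⟨⟨hS0, hSadd, hSθ⟩, hcS⟩
    let S' : AddSubmonoid ℕ := ⟨⟨S, fun {u v} hu hv => hSadd u hu v hv⟩, hS0⟩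
    refine (AddSubmonoid.closure_le (S := S')).2 ?_ hx
    rintro _ ⟨k, rfl⟩
    induction k with
    | zero => rwa [tF_zero]
    | succ k ih => rw [tF_succ]; exact hSθ _ ih (tF_pos hb hc k).ne'

theorem pow_mul_add_mul_mem_closure {K Y : ℕ} (hY : Y < sF a K) :
    a ^ K * c + b * Y ∈ AddSubmonoid.closure (tF a b c '' Set.Iio K) := by
  induction K generalizing Y with
  | zero => simp [sF] at hY
  | succ K ih =>
    have hgen : ∀ y ≤ sF a K,
        a ^ K * c + b * y ∈ AddSubmonoid.closure (tF a b c '' Set.Iio (K + 1)) := by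
      intro y hy
      rcases hy.lt_or_eq with hy | rfl
      · exact AddSubmonoid.closure_mono (Set.image_mono (Set.Iio_subset_Iio K.le_succ)) (ih hy)
      · exact AddSubmonoid.subset_closure ⟨K, Nat.lt_succ_self K, rfl⟩
    rw [pow_succ, mul_comm _ a, mul_assoc]
    exact AddSubmonoid.mul_add_mul_mem_of_forall_le hgen a (by rw [sF_succ] at hY; omega)

theorem tF_mem_closure_Iio (hc : 0 < c) {k : ℕ} (hk : c ≤ sF a k) :
    tF a b c k ∈ AddSubmonoid.closure (tF a b c '' Set.Iio k) := by
  have hk0 : 0 < k := Nat.pos_of_ne_zero fun h => by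
    rw [h, sF, Finset.sum_range_zero] at hk; omega
  have hsplit : tF a b c k = (a ^ k * c + b * (sF a k - c)) + b • tF a b c 0 := by
    rw [tF_zero, smul_eq_mul, tF, add_assoc, ← Nat.mul_add, Nat.sub_add_cancel hk]
  have hmem_zero : tF a b c 0 ∈ AddSubmonoid.closure (tF a b c '' Set.Iio k) :=
    AddSubmonoid.subset_closure ⟨0, hk0, rfl⟩
  rw [hsplit]
  exact add_mem (pow_mul_add_mul_mem_closure (Nat.sub_lt_self hc hk)) (nsmul_mem hmem_zero b)

theorem closure_image_Iio_eq_Hmon (hc : 0 < c) {kt : ℕ} (hkt : c ≤ sF a kt) :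
    AddSubmonoid.closure (tF a b c '' Set.Iio kt) = Hmon a b c := by
  refine le_antisymm (AddSubmonoid.closure_mono (by rintro _ ⟨k, -, rfl⟩; exact ⟨k, rfl⟩))
    (AddSubmonoid.closure_le.2 ?_)
  rintro _ ⟨k, rfl⟩
  induction k using Nat.strong_induction_on with
  | _ k ih =>
    rcases lt_or_ge k kt with hk | hk
    · exact AddSubmonoid.subset_closure ⟨k, hk, rfl⟩
    · refine (AddSubmonoid.closure_le.2 ?_) (tF_mem_closure_Iio hc (hkt.trans (sF_mono a hk)))
      rintro _ ⟨i, hi, rfl⟩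
      exact ih i hi

theorem exists_eq_mul_add_mul_of_mem_Hmon (ha : 0 < a) {x : ℕ} (hx : x ∈ Hmon a b c)
    (hx0 : x ≠ 0) : ∃ Y J, 0 < J ∧ x = (c * (a - 1) + b) * Y + c * J := by
  induction hx using AddSubmonoid.closure_induction with
  | mem x hx =>
    obtain ⟨k, rfl⟩ := hx
    exact ⟨sF a k, 1, one_pos, by rw [tF_eq_mul_sF_add ha, mul_one]⟩
  | zero => exact absurd rfl hx0
  | add x y _ _ ihx ihy =>
    rcases eq_or_ne x 0 with rfl | hx0
    · simp_all
    rcases eq_or_ne y 0 with rfl | hy0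
    · simp_all
    obtain ⟨Y₁, J₁, hJ₁, rfl⟩ := ihx hx0
    obtain ⟨Y₂, J₂, hJ₂, rfl⟩ := ihy hy0
    exact ⟨Y₁ + Y₂, J₁ + J₂, by omega, by ring⟩

/-- A decomposition `tF a b c i = y + z` into nonzero elements would give
`d * (sF a i - Y) = c * (J - 1)` with `J ≥ 2`; as `d ≡ b` is prime to `c`, this forces
`c ≤ sF a i`. -/
theorem eq_zero_or_eq_zero_of_add_eq_tF (ha : 0 < a) (hcop : Nat.Coprime b c) {i : ℕ}
    (hi : sF a i < c) {y z : ℕ} (hy : y ∈ Hmon a b c) (hz : z ∈ Hmon a b c)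
    (h : y + z = tF a b c i) : y = 0 ∨ z = 0 := by
  by_contra! hyz
  obtain ⟨Y₁, J₁, hJ₁, rfl⟩ := exists_eq_mul_add_mul_of_mem_Hmon ha hy hyz.1
  obtain ⟨Y₂, J₂, hJ₂, rfl⟩ := exists_eq_mul_add_mul_of_mem_Hmon ha hz hyz.2
  rw [tF_eq_mul_sF_add ha] at h
  set d := c * (a - 1) + b
  have hc : 0 < c := by omega
  have hY : Y₁ + Y₂ < sF a i := by
    by_contra! hle
    have hdY := Nat.mul_le_mul_left d hle
    have hcJ := Nat.mul_le_mul_left c (show 2 ≤ J₁ + J₂ by omega)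
    rw [Nat.mul_add] at hdY hcJ
    omega
  have hdvd : c ∣ d * (sF a i - (Y₁ + Y₂)) := by
    refine ⟨J₁ + J₂ - 1, ?_⟩
    rw [Nat.mul_sub, Nat.mul_sub, Nat.mul_add, Nat.mul_add, mul_one]
    omega
  have hcd : Nat.Coprime c d := (Nat.coprime_mul_left_add_right c b (a - 1)).2 hcop.symm
  have := Nat.le_of_dvd (by omega) (hcd.dvd_of_dvd_mul_left hdvd)
  omega

end

theorem stmt9 (a b c : ℕ) (ha : 0 < a) (hb : 0 < b) (hc : 2 ≤ c)
    (hcop : Nat.gcd b c = 1) (kt : ℕ) (hkt : kt = sInf {k : ℕ | c - 1 < sF a k}) :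
    (∃ T : Set ℕ, (AddSubmonoid.closure T : Set ℕ) = Gset a b c ∧
      (∀ T' ⊆ T, (AddSubmonoid.closure T' : Set ℕ) = Gset a b c → T' = T) ∧
      T.ncard = kt) ∧
    ∀ T : Set ℕ, (AddSubmonoid.closure T : Set ℕ) = Gset a b c →
      (∀ T' ⊆ T, (AddSubmonoid.closure T' : Set ℕ) = Gset a b c → T' = T) →
      T.ncard = kt := by
  have hkt_mem : c ≤ sF a kt := by
    have hne : c - 1 < sF a c :=
      (Nat.sub_lt (by omega) one_pos).trans_le ((sF_strictMono ha).id_le c)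
    exact Nat.le_of_pred_lt (hkt ▸ Nat.sInf_mem (s := {k : ℕ | c - 1 < sF a k}) ⟨c, hne⟩)
  have hlt_kt : ∀ i < kt, sF a i < c := fun i hi => by
    have := Nat.notMem_of_lt_sInf (hkt ▸ hi)
    simp only [Set.mem_ofPred_eq, not_lt] at this
    omega
  simp only [Gset_eq_Hmon hb (by omega : 0 < c), SetLike.coe_set_eq]
  set T₀ := tF a b c '' Set.Iio kt
  have hgen : AddSubmonoid.closure T₀ = Hmon a b c := closure_image_Iio_eq_Hmon (by omega) hkt_mem
  have hsub : ∀ T, AddSubmonoid.closure T = Hmon a b c → T₀ ⊆ T := by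
    rintro T hT _ ⟨i, hi, rfl⟩
    refine AddSubmonoid.mem_of_mem_closure_of_forall_add_eq ?_ (tF_pos hb (by omega) i).ne' ?_
    · exact hT ▸ AddSubmonoid.subset_closure ⟨i, rfl⟩
    · rw [hT]
      exact fun y hy z hz => eq_zero_or_eq_zero_of_add_eq_tF ha hcop (hlt_kt i hi) hy hz
  have hcard : T₀.ncard = kt := by
    rw [Set.ncard_image_of_injective _ ((tF_strictMono ha hb).injective), Set.ncard_Iio_nat]
  exact ⟨⟨T₀, hgen, fun T' hT' hgen' => hT'.antisymm (hsub T' hgen'), hcard⟩,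
    fun T hT hmin => hmin T₀ (hsub T hT) hgen ▸ hcard⟩
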